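/- arXiv:1808.01156 — 2 statements merged into one kernel-verified Lean document; each statement's English description precedes it below -/
import Mathlib

section
/- Let S_n and S_{n,m} be as in the recursive definition. Then for n ≥ 1, m ∈ {1,...,n}, u_{n+1} ∈ [0,1], the iterated integral ∫_0^{u_{n+1}} ··· ∫_0^{u_2} S_{n,m}(u) du_1···du_n equals ∑_{l=0}^m (u_{n+1}^{2n-l}/(2n)!) · (1/(n-l+1)) · C(2n, l) · ∑_{h=0}^{m-l} (-1)^h C(2n-2l-h, n-l) C(n-l+1, h). -/
open intervalIntegral

/-- The recursively defined functions `S_n` from the paper: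
`S_0 = 1` and `S_n(u) = ∑_{i=1}^n (-1)^{i+n} u_i^{n-i+1}/(n-i+1)! · S_{i-1}(u_1,…,u_{i-1})`. -/
noncomputable def S : ∀ n : ℕ, (Fin n → ℝ) → ℝ
  | 0, _ => 1
  | (n + 1), u => ∑ i : Fin (n + 1),
      (-1 : ℝ) ^ ((i : ℕ) + n) * u i ^ (n + 1 - (i : ℕ)) /
          (Nat.factorial (n + 1 - (i : ℕ)))
        * S i (fun j => u (Fin.castLE i.isLt.le j))

/-- `iterInt n f t` is the iterated integral
`∫_0^t ∫_0^{u_n} ⋯ ∫_0^{u_2} f(u_1,…,u_n) du_1 ⋯ du_n`. -/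
noncomputable def iterInt : ∀ n : ℕ, ((Fin n → ℝ) → ℝ) → ℝ → ℝ
  | 0, f, _ => f (fun i => i.elim0)
  | (n + 1), f, t => ∫ x in (0 : ℝ)..t, iterInt n (fun u => f (Fin.snoc u x)) x


/-- `S_{n,m}(u) = S_n(u_1,…,u_{n-m},1,…,1)`: the last `m` arguments are set to `1`. -/
noncomputable def Snm (n m : ℕ) (u : Fin n → ℝ) : ℝ :=
  S n (fun i => if (i : ℕ) < n - m then u i else 1)

/-!
Write `P n k` for the `k`-fold iterated integral of `S_n(u_1, …, u_k, 1, …, 1)`. In the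
recursion for `S_{n+1}`, a summand with `i < k` depends only on `u_1, …, u_{i+1}` and
integrates to a single monomial, while a summand with `i ≥ k` is a multiple of
`S_i(u_1, …, u_k, 1, …, 1)`. Strong induction on `n` therefore shows
`P n k t = ∑_{l ≤ n-k} c(n,k,l) t^{n+k-l}` with `c(n,k,l) = T(n-l, n-k-l) / (l! (n+k-l)! (n-l+1))`,
where `T(a,d) = (-1)^d C(a-1,d) C(2a-d,a-d) = ∑_{h ≤ d} (-1)^h C(2a-h,a) C(a+1,h)`: the top
coefficient telescopes in `d`, and the others reduce to `∑_{j ≤ l} (-1)^j C(l+1,j+1) = 1`.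
The `m` variables set to `1` in `S_{n,m}` are integrated last and only raise the degree.

The iterated integral is additive on continuous integrands, whose slices are integrable.
-/

open Finset
open scoped Nat

theorem iterInt_succ (k : ℕ) (f : (Fin (k + 1) → ℝ) → ℝ) (t : ℝ) :
    iterInt (k + 1) f t = ∫ x in (0 : ℝ)..t, iterInt k (fun u => f (Fin.snoc u x)) x := rfl

theorem continuous_parametric_iterInt {X : Type*} [TopologicalSpace X] :
    ∀ {k : ℕ} {F : X → (Fin k → ℝ) → ℝ}, Continuous (Function.uncurry F) →
      Continuous fun p : X × ℝ => iterInt k (F p.1) p.2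
  | 0, F, hF => by
    simp only [iterInt]
    fun_prop
  | k + 1, F, hF => by
    simp only [iterInt_succ]
    refine continuous_parametric_primitive_of_continuous
      (f := fun p x => iterInt k (fun u => F p (Fin.snoc u x)) x) ?_
    have := continuous_parametric_iterInt (X := X × ℝ) (k := k)
      (F := fun q u => F q.1 (Fin.snoc u q.2)) ?_
    · exact this.comp (by fun_prop : Continuous fun q : X × ℝ => (q, q.2))
    · exact hF.comp ((continuous_fst.comp continuous_fst).prodMk
        (continuous_snd.finSnoc (continuous_snd.comp continuous_fst)))

theorem continuous_iterInt_snoc {k : ℕ} {f : (Fin (k + 1) → ℝ) → ℝ} (hf : Continuous f) :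
    Continuous fun x => iterInt k (fun u => f (Fin.snoc u x)) x :=
  (continuous_parametric_iterInt (F := fun x u => f (Fin.snoc u x))
    (hf.comp (continuous_snd.finSnoc (A := fun _ => ℝ) continuous_fst))).comp
    (continuous_id.prodMk continuous_id)

theorem iterInt_const_mul (c : ℝ) :
    ∀ {k : ℕ} (f : (Fin k → ℝ) → ℝ) (t : ℝ),
      iterInt k (fun u => c * f u) t = c * iterInt k f t
  | 0, _, _ => rfl
  | k + 1, f, t => by
    simp only [iterInt_succ, iterInt_const_mul c, integral_const_mul]

theorem iterInt_sum {ι : Type*} (s : Finset ι) :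
    ∀ {k : ℕ} {f : ι → (Fin k → ℝ) → ℝ}, (∀ i ∈ s, Continuous (f i)) → ∀ t,
      iterInt k (fun u => ∑ i ∈ s, f i u) t = ∑ i ∈ s, iterInt k (f i) t
  | 0, _, _, _ => rfl
  | k + 1, f, hf, t => by
    simp only [iterInt_succ]
    rw [← integral_finsetSum fun i hi =>
      (continuous_iterInt_snoc (hf i hi)).intervalIntegrable _ _]
    refine integral_congr fun x _ => iterInt_sum s (fun i hi => ?_) x
    exact (hf i hi).comp (by fun_prop)

theorem iterInt_comp_init {k : ℕ} (f : (Fin k → ℝ) → ℝ) (t : ℝ) :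
    iterInt (k + 1) (fun u => f (Fin.init u)) t = ∫ x in (0 : ℝ)..t, iterInt k f x := by
  simp only [iterInt_succ, Fin.init_snoc]

theorem iterInt_last_pow_mul_comp_init {k : ℕ} (q : ℕ) (f : (Fin k → ℝ) → ℝ) (t : ℝ) :
    iterInt (k + 1) (fun u => u (Fin.last k) ^ q * f (Fin.init u)) t
      = ∫ x in (0 : ℝ)..t, x ^ q * iterInt k f x := by
  simp only [iterInt_succ, Fin.snoc_last, Fin.init_snoc, iterInt_const_mul]

theorem iterInt_comp_castLE_of_eq_sum {k : ℕ} {f : (Fin k → ℝ) → ℝ} {ι : Type*}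
    {s : Finset ι} {c : ι → ℝ} {e : ι → ℕ} (hf : ∀ x, iterInt k f x = ∑ l ∈ s, c l * x ^ e l) :
    ∀ (j : ℕ) (t : ℝ),
      iterInt (k + j) (fun u => f (fun i => u (Fin.castLE (k.le_add_right j) i))) t
      = ∑ l ∈ s, c l * ((e l)! / (e l + j)! : ℝ) * t ^ (e l + j)
  | 0, t => by
    refine (hf t).trans (sum_congr rfl fun l _ => ?_)
    rw [Nat.add_zero, div_self (by positivity), mul_one]
  | j + 1, t => by
    refine (iterInt_comp_init
      (fun v => f (fun i => v (Fin.castLE (k.le_add_right j) i))) t).trans ?_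
    rw [integral_congr fun x _ => iterInt_comp_castLE_of_eq_sum hf j x,
      integral_finsetSum fun l _ => by apply Continuous.intervalIntegrable; fun_prop]
    refine sum_congr rfl fun l _ => ?_
    rw [integral_const_mul, integral_pow, zero_pow (Nat.succ_ne_zero _), sub_zero, ← add_assoc,
      Nat.factorial_succ (e l + j)]
    push_cast
    field_simp

def tCoeff (a d : ℕ) : ℝ :=
  (-1) ^ d * ((a - 1).choose d : ℝ) * ((2 * a - d).choose (a - d) : ℝ)

theorem tCoeff_zero (a : ℕ) : tCoeff a 0 = (2 * a).choose a := by
  simp [tCoeff]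

theorem tCoeff_self_of_pos {a : ℕ} (ha : 0 < a) : tCoeff a a = 0 := by
  simp [tCoeff, Nat.choose_eq_zero_of_lt (Nat.sub_lt ha one_pos)]

theorem tCoeff_succ {a d : ℕ} (hd : d < a) :
    tCoeff a (d + 1) = tCoeff a d +
      (-1) ^ (d + 1) * ((2 * a - (d + 1)).choose a : ℝ) * ((a + 1).choose (d + 1) : ℝ) := by
  obtain ⟨c, rfl⟩ : ∃ c, a = d + 1 + c := ⟨a - (d + 1), by omega⟩
  rcases c with _ | c
  · rw [tCoeff_self_of_pos (by omega)]
    simp only [tCoeff, add_zero, add_tsub_cancel_right, Nat.choose_self, Nat.cast_one, mul_one,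
      show 2 * (d + 1) - d = d + 2 by omega, show d + 1 - d = 1 by omega, Nat.choose_one_right,
      Nat.cast_add, Nat.cast_ofNat, show 2 * (d + 1) - (d + 1) = d + 1 by omega,
      Nat.choose_succ_self_right]
    ring
  · simp only [tCoeff]
    rw [show d + 1 + (c + 1) - 1 = d + c + 1 by omega,
      show 2 * (d + 1 + (c + 1)) - (d + 1) = d + 2 * c + 3 by omega,
      show d + 1 + (c + 1) - (d + 1) = c + 1 by omega,
      show 2 * (d + 1 + (c + 1)) - d = d + 2 * c + 4 by omega,
      show d + 1 + (c + 1) - d = c + 2 by omega,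
      show d + 1 + (c + 1) = d + c + 2 by omega]
    rw [Nat.cast_choose ℝ (by omega : d ≤ d + c + 1),
      Nat.cast_choose ℝ (by omega : c + 2 ≤ d + 2 * c + 4),
      Nat.cast_choose ℝ (by omega : d + 1 ≤ d + c + 1),
      Nat.cast_choose ℝ (by omega : c + 1 ≤ d + 2 * c + 3),
      Nat.cast_choose ℝ (by omega : d + c + 2 ≤ d + 2 * c + 3),
      Nat.cast_choose ℝ (by omega : d + 1 ≤ d + c + 2 + 1)]
    rw [show d + c + 1 - d = c + 1 by omega, show d + 2 * c + 4 - (c + 2) = d + c + 2 by omega,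
      show d + c + 1 - (d + 1) = c by omega, show d + 2 * c + 3 - (c + 1) = d + c + 2 by omega,
      show d + 2 * c + 3 - (d + c + 2) = c + 1 by omega,
      show d + c + 2 + 1 - (d + 1) = c + 2 by omega]
    simp only [show d + 2 * c + 4 = d + 2 * c + 3 + 1 by omega,
      show d + c + 2 = d + c + 1 + 1 by omega, show c + 2 = c + 1 + 1 by omega, Nat.factorial_succ]
    push_cast
    field_simp
    ring

theorem sum_range_choose_eq_tCoeff (a : ℕ) :
    ∀ d ≤ a,
      ∑ h ∈ range (d + 1), (-1 : ℝ) ^ h * ((2 * a - h).choose a : ℝ) * ((a + 1).choose h : ℝ)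
        = tCoeff a d
  | 0, _ => by simp [tCoeff_zero]
  | d + 1, hd => by
    rw [sum_range_succ, sum_range_choose_eq_tCoeff a d (by omega), tCoeff_succ (by omega)]

theorem sum_range_neg_one_pow_mul_choose_succ (l : ℕ) :
    ∑ j ∈ range (l + 1), (-1 : ℝ) ^ j * ((l + 1).choose (j + 1) : ℝ) = 1 := by
  have h := congrArg (Int.cast : ℤ → ℝ)
    (Int.alternating_sum_range_choose_of_ne (Nat.succ_ne_zero l))
  push_cast at h
  rw [sum_range_succ'] at h
  simp only [pow_succ, mul_neg_one, neg_mul, sum_neg_distrib, Nat.succ_eq_add_one, pow_zero,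
    Nat.choose_zero_right, Nat.cast_one, mul_one] at h
  linarith

theorem tCoeff_succ_sub_div_eq_sum (n : ℕ) :
    ∀ k ≤ n + 1, tCoeff (n + 1) (n + 1 - k) / (n + 2)
      = ∑ i ∈ range k, (-1) ^ (i + n) / ((n + 1 - i)! : ℝ) * ((n + i + 1)! / (i ! * (i + 1)!))
  | 0, _ => by simp [tCoeff_self_of_pos]
  | k + 1, hk => by
    obtain ⟨b, rfl⟩ : ∃ b, n = k + b := ⟨n - k, by omega⟩
    rw [sum_range_succ, ← tCoeff_succ_sub_div_eq_sum (k + b) k (by omega),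
      show k + b + 1 - k = b + 1 by omega, show k + b + 1 - (k + 1) = b by omega,
      tCoeff_succ (by omega), show 2 * (k + b + 1) - (b + 1) = 2 * k + b + 1 by omega,
      Nat.cast_choose ℝ (by omega : k + b + 1 ≤ 2 * k + b + 1),
      Nat.cast_choose ℝ (by omega : b + 1 ≤ k + b + 1 + 1),
      show 2 * k + b + 1 - (k + b + 1) = k by omega, show k + b + 1 + 1 - (b + 1) = k + 1 by omega,
      show k + b + k + 1 = 2 * k + b + 1 by omega, show k + (k + b) = b + 2 * k by omega]
    simp only [pow_add, pow_mul, neg_one_sq, one_pow, mul_one, pow_one,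
      Nat.factorial_succ (k + b + 1)]
    push_cast
    field_simp
    ring

noncomputable def iterCoeff (n k l : ℕ) : ℝ :=
  tCoeff (n - l) (n - k - l) / (l ! * (n + k - l)! * ((n - l : ℕ) + 1))

noncomputable def iterPoly (n k : ℕ) (t : ℝ) : ℝ :=
  ∑ l ∈ range (n - k + 1), iterCoeff n k l * t ^ (n + k - l)

theorem iterPoly_self (i : ℕ) (x : ℝ) : iterPoly i i x = x ^ (2 * i) / (i ! * (i + 1)!) := by
  simp only [iterPoly, iterCoeff, Nat.sub_self, zero_add, sum_range_one, tCoeff_zero, Nat.sub_zero,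
    Nat.factorial_zero, Nat.cast_one, one_mul, ← two_mul, show 2 * i - i = i by omega,
    Nat.cast_choose ℝ (Nat.le_mul_of_pos_left i two_pos), Nat.factorial_succ i]
  push_cast
  field_simp

theorem iterCoeff_succ_succ {n k l : ℕ} (hl : l + k ≤ n) :
    iterCoeff (n + 1) k (l + 1)
      = ∑ j ∈ range (l + 1), (-1) ^ j / ((j + 1)! : ℝ) * iterCoeff (n - j) k (l - j) := by
  have hterm : ∀ j ∈ range (l + 1), (-1) ^ j / ((j + 1)! : ℝ) * iterCoeff (n - j) k (l - j)
      = (-1) ^ j * ((l + 1).choose (j + 1) : ℝ) * iterCoeff (n + 1) k (l + 1) := by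
    intro j hj
    have hj : j ≤ l := Nat.lt_succ_iff.mp (mem_range.mp hj)
    simp only [iterCoeff, show n - j - (l - j) = n - l by omega,
      show n + 1 - (l + 1) = n - l by omega, show n - j - k - (l - j) = n - k - l by omega,
      show n + 1 - k - (l + 1) = n - k - l by omega,
      show n - j + k - (l - j) = n + k - l by omega, show n + 1 + k - (l + 1) = n + k - l by omega,
      Nat.cast_choose ℝ (Nat.succ_le_succ hj), show l + 1 - (j + 1) = l - j by omega]
    field_simp
  rw [sum_congr rfl hterm, ← sum_mul, sum_range_neg_one_pow_mul_choose_succ, one_mul]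

theorem iterCoeff_succ_zero {n k : ℕ} (hk : k ≤ n + 1) :
    iterCoeff (n + 1) k 0 = ∑ i ∈ range k, (-1) ^ (i + n) / ((n + 1 - i)! : ℝ) *
      ((n + i + 1)! / (i ! * (i + 1)! * (n + k + 1)!)) := by
  simp only [iterCoeff, Nat.sub_zero, Nat.factorial_zero, Nat.cast_one, one_mul]
  rw [show n + 1 + k = n + k + 1 by omega,
    show ((n + 1 : ℕ) : ℝ) + 1 = n + 2 by push_cast; ring, ← div_div, div_right_comm,
    tCoeff_succ_sub_div_eq_sum n k hk, sum_div]
  refine sum_congr rfl fun i _ => ?_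
  field_simp

theorem sum_Ico_mul_iterPoly {n k : ℕ} (hk : k ≤ n + 1) (t : ℝ) :
    ∑ i ∈ Ico k (n + 1), (-1) ^ (i + n) / ((n + 1 - i)! : ℝ) * iterPoly i k t
      = ∑ l ∈ range (n + 1 - k), iterCoeff (n + 1) k (l + 1) * t ^ (n + k - l) := by
  set N := n + 1 - k
  let f : ℕ → ℕ → ℝ := fun j a =>
    (-1) ^ j / ((j + 1)! : ℝ) * iterCoeff (n - j) k a * t ^ (n + k - (j + a))
  calc _ = ∑ j ∈ range N, ∑ a ∈ range (N - j), f j a := by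
        rw [show Ico k (n + 1) = Ico (n + 1 - N) (n + 1 - 0) by congr 1; omega,
          ← sum_Ico_reflect _ 0 (by omega : N ≤ n + 1), range_eq_Ico]
        refine sum_congr rfl fun j hj => ?_
        have hj : j < N := (mem_Ico.mp hj).2
        rw [iterPoly, mul_sum, show n - j - k + 1 = N - j by omega]
        refine sum_congr rfl fun a _ => ?_
        rw [show n - j + n = j + 2 * (n - j) by omega, pow_add, pow_mul, neg_one_sq, one_pow,
          mul_one, show n + 1 - (n - j) = j + 1 by omega,
          show n - j + k - a = n + k - (j + a) by omega]
        ring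
    _ = ∑ l ∈ range N, ∑ j ∈ range (l + 1), f j (l - j) := (sum_range_diag_flip N f).symm
    _ = _ := by
        refine sum_congr rfl fun l hl => ?_
        rw [iterCoeff_succ_succ (by have := mem_range.mp hl; omega), sum_mul]
        refine sum_congr rfl fun j hj => ?_
        dsimp only [f]
        rw [show j + (l - j) = l by have := mem_range.mp hj; omega]

theorem iterPoly_succ {n k : ℕ} (hk : k ≤ n + 1) (t : ℝ) :
    iterPoly (n + 1) k t = ∑ i ∈ range (n + 1), (-1) ^ (i + n) / ((n + 1 - i)! : ℝ) *
      if i < k then (n + i + 1)! / (i ! * (i + 1)! * (n + k + 1)!) * t ^ (n + k + 1)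
      else iterPoly i k t := by
  simp only [mul_ite]
  rw [← sum_range_add_sum_Ico _ hk, sum_ite_of_true fun i hi => mem_range.mp hi,
    sum_ite_of_false fun i hi => not_lt.mpr (mem_Ico.mp hi).1, sum_Ico_mul_iterPoly hk, iterPoly,
    sum_range_succ', add_comm, show n + 1 + k - 0 = n + k + 1 by omega, iterCoeff_succ_zero hk,
    sum_mul]
  refine congrArg₂ _ (sum_congr rfl fun i _ => by ring) (sum_congr rfl fun l _ => ?_)
  rw [show n + 1 + k - (l + 1) = n + k - l by omega]

def padOnes (k n : ℕ) (u : Fin k → ℝ) : Fin n → ℝ :=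
  fun i => if h : (i : ℕ) < k then u ⟨i, h⟩ else 1

@[fun_prop]
theorem continuous_padOnes (k n : ℕ) : Continuous (padOnes k n) :=
  continuous_pi fun i => by
    by_cases h : (i : ℕ) < k
    · simpa [padOnes, h] using continuous_apply _
    · simpa [padOnes, h] using continuous_const

@[fun_prop]
theorem continuous_S (n : ℕ) : Continuous (S n) := by
  induction n using Nat.strong_induction_on with
  | _ n ih =>
    rcases n with _ | n
    · rw [show S 0 = fun _ => 1 from funext S.eq_1]
      exact continuous_const
    · rw [show S (n + 1) = _ from funext (S.eq_2 n)]
      refine continuous_finsetSum _ fun i _ => ?_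
      have hS :
          Continuous fun u : Fin (n + 1) → ℝ => S i (fun j => u (Fin.castLE i.isLt.le j)) :=
        (ih i i.isLt).comp (continuous_pi fun j => continuous_apply _)
      exact ((continuous_const.mul ((continuous_apply i).pow _)).div_const _).mul hS

theorem iterInt_padOnes_pow_mul_S_of_lt {n k : ℕ} (i : Fin (n + 1)) (hik : (i : ℕ) < k)
    (hS : ∀ x, iterInt i (S i) x = iterPoly i i x) (t : ℝ) :
    iterInt k (fun u => padOnes k (n + 1) u i ^ (n + 1 - i) *
        S i (fun j => padOnes k (n + 1) u (Fin.castLE i.isLt.le j))) t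
      = (n + i + 1)! / (i ! * (i + 1)! * (n + k + 1)!) * t ^ (n + k + 1) := by
  obtain ⟨i, hi⟩ := i
  simp only at hik hS ⊢
  obtain ⟨j, rfl⟩ : ∃ j, k = i + 1 + j := ⟨k - (i + 1), by omega⟩
  let g : (Fin (i + 1) → ℝ) → ℝ := fun w => w (Fin.last i) ^ (n + 1 - i) * S i (Fin.init w)
  have hg x : iterInt (i + 1) g x
      = ∑ _l ∈ range 1, 1 / (i ! * (i + 1)! * (n + i + 2) : ℝ) * x ^ (n + i + 2) := by
    have hpow : ∀ y : ℝ, y ^ (n + 1 - i) * iterInt i (S i) y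
        = 1 / (i ! * (i + 1)! : ℝ) * y ^ (n + i + 1) := fun y => by
      rw [hS, iterPoly_self, show n + i + 1 = (n + 1 - i) + 2 * i by omega, pow_add]
      ring
    simp only [g, iterInt_last_pow_mul_comp_init, sum_range_one, hpow, integral_const_mul,
      integral_pow, zero_pow (Nat.succ_ne_zero _), sub_zero]
    push_cast
    field_simp
    ring
  calc _ = iterInt (i + 1 + j)
        (fun u => g (fun l => u (Fin.castLE (Nat.le_add_right _ j) l))) t := by
        congr 1
        funext u
        simp only [g, padOnes, dif_pos hik]
        congr 2
        funext l
        rw [dif_pos (by simp only [Fin.val_castLE]; omega)]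
        rfl
    _ = _ := by
        rw [iterInt_comp_castLE_of_eq_sum hg j t, sum_range_one,
          show n + i + 2 + j = n + (i + 1 + j) + 1 by omega, Nat.factorial_succ (n + i + 1)]
        push_cast
        field_simp
        ring

theorem padOnes_self {k : ℕ} (u : Fin k → ℝ) : padOnes k k u = u :=
  funext fun i => dif_pos i.isLt

theorem iterInt_S_padOnes (n : ℕ) :
    ∀ k ≤ n, ∀ t, iterInt k (fun u => S n (padOnes k n u)) t = iterPoly n k t := by
  induction n using Nat.strong_induction_on with
  | _ n ih =>
  rcases n with _ | n
  · intro k hk t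
    obtain rfl : k = 0 := by omega
    simp [iterInt, S.eq_1, iterPoly_self]
  · intro k hk t
    have hterm : ∀ i : Fin (n + 1), iterInt k (fun u => (-1) ^ ((i : ℕ) + n) *
        padOnes k (n + 1) u i ^ (n + 1 - (i : ℕ)) / ((n + 1 - (i : ℕ))! : ℝ) *
          S i (fun j => padOnes k (n + 1) u (Fin.castLE i.isLt.le j))) t
        = (-1) ^ ((i : ℕ) + n) / ((n + 1 - (i : ℕ))! : ℝ) *
          if (i : ℕ) < k then (n + i + 1)! / (i ! * (i + 1)! * (n + k + 1)!) * t ^ (n + k + 1)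
          else iterPoly i k t := by
      intro i
      split_ifs with hik
      · have hS x : iterInt i (S i) x = iterPoly i i x := by
          simpa only [padOnes_self] using ih i i.isLt i le_rfl x
        rw [← iterInt_padOnes_pow_mul_S_of_lt i hik hS t, ← iterInt_const_mul]
        congr 1
        funext u
        ring
      · rw [← ih i i.isLt k (by omega) t, ← iterInt_const_mul]
        congr 1
        funext u
        rw [show padOnes k (n + 1) u i = 1 from dif_neg hik, one_pow,
          show (fun j => padOnes k (n + 1) u (Fin.castLE i.isLt.le j)) = padOnes k i u from rfl]
        ring
    simp only [S.eq_2]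
    rw [iterInt_sum _ (fun i _ => by fun_prop)]
    simp only [hterm]
    rw [iterPoly_succ hk, ← Fin.sum_univ_eq_sum_range]

theorem Snm_add (k m : ℕ) :
    Snm (k + m) m
      = fun u => S (k + m) (padOnes k (k + m) fun i => u (Fin.castLE (k.le_add_right m) i)) := by
  funext u
  simp only [Snm, Nat.add_sub_cancel]
  rfl

theorem iterInt_Snm_add (k m : ℕ) (t : ℝ) :
    iterInt (k + m) (Snm (k + m) m) t = ∑ l ∈ range (m + 1), iterCoeff (k + m) k l *
      ((k + m + k - l)! / (k + m + k - l + m)! : ℝ) * t ^ (k + m + k - l + m) := by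
  have hpoly x : iterInt k (fun u => S (k + m) (padOnes k (k + m) u)) x
      = ∑ l ∈ range (m + 1), iterCoeff (k + m) k l * x ^ (k + m + k - l) := by
    rw [iterInt_S_padOnes _ _ (by omega), iterPoly, show k + m - k = m by omega]
  rw [Snm_add, iterInt_comp_castLE_of_eq_sum hpoly m t]

theorem stmt6_general (n m : ℕ) (hmn : m ≤ n)
    (t : ℝ) :
    iterInt n (Snm n m) t
      = ∑ l ∈ Finset.range (m + 1),
          t ^ (2 * n - l) / (Nat.factorial (2 * n) : ℝ) *
            (1 / ((n - l + 1 : ℕ) : ℝ)) * (Nat.choose (2 * n) l : ℝ) *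
            ∑ h ∈ Finset.range (m - l + 1),
              (-1 : ℝ) ^ h * (Nat.choose (2 * n - 2 * l - h) (n - l) : ℝ) *
                (Nat.choose (n - l + 1) h : ℝ) := by
  obtain ⟨k, rfl⟩ : ∃ k, n = k + m := ⟨n - m, by omega⟩
  rw [iterInt_Snm_add]
  refine sum_congr rfl fun l hl => ?_
  have hl : l ≤ m := Nat.lt_succ_iff.mp (mem_range.mp hl)
  have hinner : ∑ h ∈ range (m - l + 1), (-1 : ℝ) ^ h *
      ((2 * (k + m) - 2 * l - h).choose (k + m - l) : ℝ) * ((k + m - l + 1).choose h : ℝ)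
      = tCoeff (k + m - l) (m - l) := by
    rw [← sum_range_choose_eq_tCoeff _ _ (by omega)]
    exact sum_congr rfl fun h _ => by
      rw [show 2 * (k + m) - 2 * l - h = 2 * (k + m - l) - h by omega]
  rw [hinner, iterCoeff, show k + m - k - l = m - l by omega,
    show k + m + k - l + m = 2 * (k + m) - l by omega,
    Nat.cast_choose ℝ (by omega : l ≤ 2 * (k + m))]
  push_cast
  field_simp

theorem stmt6 (n m : ℕ) (hn : 1 ≤ n) (hm : 1 ≤ m) (hmn : m ≤ n)
    (t : ℝ) (ht : t ∈ Set.Icc (0 : ℝ) 1) :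
    iterInt n (Snm n m) t
      = ∑ l ∈ Finset.range (m + 1),
          t ^ (2 * n - l) / (Nat.factorial (2 * n) : ℝ) *
            (1 / ((n - l + 1 : ℕ) : ℝ)) * (Nat.choose (2 * n) l : ℝ) *
            ∑ h ∈ Finset.range (m - l + 1),
              (-1 : ℝ) ^ h * (Nat.choose (2 * n - 2 * l - h) (n - l) : ℝ) *
                (Nat.choose (n - l + 1) h : ℝ) :=
  stmt6_general n m hmn t
end

section
/- For d independent uniform[0,1] random variables, the joint distribution function of the order statistic at a point u with 0 ≤ u_1 ≤ u_2 ≤ ··· ≤ u_d ≤ 1 equals d! times the determinant of the d×d matrix A(u) with entries a_{i,j}(u) = u_i^{j-i+1}/(j-i+1)! for i ≤ j+1 and a_{i,j}(u) = 0 otherwise. -/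
open MeasureTheory

/-- The uniform distribution on `[0,1]`. -/
noncomputable def unif : Measure ℝ := volume.restrict (Set.Icc 0 1)

/-- The joint distribution of `d` i.i.d. uniform `[0,1]` random variables. -/
noncomputable def unifPi (d : ℕ) : Measure (Fin d → ℝ) :=
  Measure.pi fun _ => unif

/-- The sorting (order statistic) map: `sortVec x` is the nondecreasing
rearrangement of the vector `x`. -/
noncomputable def sortVec {d : ℕ} (x : Fin d → ℝ) : Fin d → ℝ :=
  x ∘ Tuple.sort x

/-- The matrix `A(u)` with entries `a_{i,j}(u) = u_i^{j-i+1}/(j-i+1)!` for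
`i ≤ j+1` and `0` otherwise. -/
noncomputable def orderMat (d : ℕ) (u : Fin d → ℝ) : Matrix (Fin d) (Fin d) ℝ :=
  fun i j =>
    if (i : ℕ) ≤ (j : ℕ) + 1 then
      u i ^ ((j : ℕ) + 1 - (i : ℕ)) / (Nat.factorial ((j : ℕ) + 1 - (i : ℕ)))
    else 0


/-!
Sorting is `d!`-to-one off the null set of vectors with a tie, so the probability equals `d!`
times the volume of the region `0 ≤ x₁ ≤ ⋯ ≤ x_d`, `x ≤ u`. Integrating out the last coordinate,
the moments `M_n(u, k) = ∫ x_n ^ k / k!` over this region satisfy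
`M_{n+1}(u, k) = u_{n+1} ^ (k+1) / (k+1)! * M_n(u', 0) - M_n(u', k+1)`. The matrix `A(u)` with
the exponents of its last column raised by `k` is Hessenberg, its last row has only the entries
`1` and `u_n ^ (k+1) / (k+1)!`, so expanding along that row gives the same recursion for its
determinant.
-/

open Set MeasureTheory Nat
open scoped Finset

section Sorting

variable {d : ℕ}

theorem sortVec_eq_comp_of_monotone {x : Fin d → ℝ} {σ : Equiv.Perm (Fin d)}
    (h : Monotone (x ∘ σ)) : sortVec x = x ∘ σ :=
  (Tuple.comp_sort_eq_comp_iff_monotone.mpr h).symm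

theorem sortVec_apply_le_iff (x : Fin d → ℝ) (j : Fin d) (a : ℝ) :
    sortVec x j ≤ a ↔ (j : ℕ) < #{i | x i ≤ a} := by
  rw [sortVec, ← Tuple.lt_card_le_iff_apply_le_of_monotone (Tuple.monotone_sort x),
    Finset.card_equiv (Tuple.sort x) (t := {i | x i ≤ a}) (by simp)]

theorem measurable_sortVec : Measurable (sortVec (d := d)) := by
  refine measurable_pi_iff.2 fun j => measurable_of_Iic fun a => ?_
  have hcard : Measurable fun x : Fin d → ℝ => #{i | x i ≤ a} := by
    simp only [Finset.card_filter]
    exact Finset.measurable_sum _ fun i _ =>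
      Measurable.ite (measurableSet_le (measurable_pi_apply i) measurable_const)
        measurable_const measurable_const
  simpa [Set.preimage, sortVec_apply_le_iff] using hcard measurableSet_Ioi

theorem preimage_sortVec_pi_univ (I : Set ℝ) :
    sortVec ⁻¹' (univ.pi fun _ : Fin d => I) = univ.pi fun _ => I := by
  ext x
  simp only [mem_preimage, mem_univ_pi]
  exact (Tuple.sort x).forall_congr_right (q := fun i => x i ∈ I)

theorem volume_setOf_apply_eq {i j : Fin d} (hij : i ≠ j) :
    volume {x : Fin d → ℝ | x i = x j} = 0 := by
  let L : (Fin d → ℝ) →ₗ[ℝ] ℝ := .proj i - .proj j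
  have hL : {x : Fin d → ℝ | x i = x j} = LinearMap.ker L := by
    ext x
    simp [L, sub_eq_zero]
  rw [hL]
  refine Measure.addHaar_submodule _ _ fun htop => ?_
  have : Pi.single i 1 ∈ LinearMap.ker L := htop ▸ Submodule.mem_top
  simp [L, hij.symm] at this

theorem ae_injective : ∀ᵐ x : Fin d → ℝ, Function.Injective x := by
  have : {x : Fin d → ℝ | ¬ Function.Injective x} = ⋃ (i) (j) (_ : i ≠ j), {x | x i = x j} := by
    ext x
    simp only [Function.Injective]
    aesop
  rw [ae_iff, this]
  exact measure_iUnion_null fun i => measure_iUnion_null fun j =>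
    measure_iUnion_null fun hij => volume_setOf_apply_eq hij

theorem measurePreserving_comp_perm (σ : Equiv.Perm (Fin d)) :
    MeasurePreserving (fun x : Fin d → ℝ => x ∘ σ) volume volume :=
  volume_preserving_arrowCongr' σ.symm (MeasurableEquiv.refl ℝ) (.id volume)

theorem measurableSet_setOf_strictMono : MeasurableSet {x : Fin d → ℝ | StrictMono x} := by
  have : {x : Fin d → ℝ | StrictMono x} = ⋂ (i) (j) (_ : i < j), {x | x i < x j} := by
    ext x
    simp [StrictMono]
  rw [this]
  exact .iInter fun i => .iInter fun j => .iInter fun _ =>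
    measurableSet_lt (measurable_pi_apply i) (measurable_pi_apply j)

theorem volume_preimage_sortVec {T : Set (Fin d → ℝ)} (hT : MeasurableSet T) :
    volume (sortVec ⁻¹' T) = d ! * volume (T ∩ {x | Monotone x}) := by
  let piece (σ : Equiv.Perm (Fin d)) := (· ∘ σ) ⁻¹' (T ∩ {x | StrictMono x})
  have hmeas σ : MeasurableSet (piece σ) :=
    (measurePreserving_comp_perm σ).measurable (hT.inter measurableSet_setOf_strictMono)
  have hdisj : Pairwise (Function.onFun Disjoint piece) := by
    refine fun σ τ hστ => Set.disjoint_left.2 fun x ⟨_, hσ⟩ ⟨_, hτ⟩ => hστ ?_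
    have hx : Function.Injective x := by
      simpa using hσ.injective.comp σ.symm.injective
    ext a
    exact congrArg Fin.val (hx (congrFun (Tuple.unique_monotone hσ.monotone hτ.monotone) a))
  have hunion : sortVec ⁻¹' T =ᵐ[volume] ⋃ σ, piece σ := by
    filter_upwards [ae_injective] with x hx
    show (x ∈ sortVec ⁻¹' T) = (x ∈ ⋃ σ, piece σ)
    refine propext ⟨fun hxT => mem_iUnion.2 ⟨Tuple.sort x, hxT,
      (Tuple.monotone_sort x).strictMono_of_injective (hx.comp (Equiv.injective _))⟩, ?_⟩
    rintro ⟨_, ⟨σ, rfl⟩, hσT, hσ⟩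
    rwa [mem_preimage, sortVec_eq_comp_of_monotone hσ.monotone]
  have hpiece σ : volume (piece σ) = volume (T ∩ {x | Monotone x}) := by
    rw [(measurePreserving_comp_perm σ).measure_preimage
      (hT.inter measurableSet_setOf_strictMono).nullMeasurableSet]
    refine measure_congr ?_
    filter_upwards [ae_injective] with x hx
    exact propext (and_congr_right fun _ =>
      ⟨StrictMono.monotone, fun h => h.strictMono_of_injective hx⟩)
  rw [measure_congr hunion, measure_iUnion hdisj hmeas, tsum_fintype]
  simp [hpiece, Fintype.card_perm]

end Sorting

theorem unifPi_eq_restrict (d : ℕ) :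
    unifPi d = volume.restrict (univ.pi fun _ : Fin d => Icc (0 : ℝ) 1) := by
  rw [unifPi, unif, ← Measure.restrict_pi_pi, ← volume_pi]

def orderedRegion {n : ℕ} (u : Fin n → ℝ) : Set (Fin n → ℝ) := {x | Monotone x} ∩ Icc 0 u

-- The lower bound `x_n` for a further coordinate, with the convention `x_0 = 0`.
def lastOrZero : {n : ℕ} → (Fin n → ℝ) → ℝ
  | 0, _ => 0
  | _ + 1, x => x (Fin.last _)

theorem continuous_lastOrZero {n : ℕ} : Continuous (lastOrZero (n := n)) := by
  cases n with
  | zero => exact continuous_const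
  | succ n => exact continuous_apply _

section OrderedRegion

variable {n : ℕ}

theorem isCompact_orderedRegion (u : Fin n → ℝ) : IsCompact (orderedRegion u) :=
  isCompact_Icc.inter_left isClosed_monotone

theorem measurableSet_orderedRegion (u : Fin n → ℝ) : MeasurableSet (orderedRegion u) :=
  (isCompact_orderedRegion u).isClosed.measurableSet

theorem integrableOn_orderedRegion {E : Type*} [NormedAddCommGroup E] {f : (Fin n → ℝ) → E}
    (hf : Continuous f) (u : Fin n → ℝ) : IntegrableOn f (orderedRegion u) :=
  hf.continuousOn.integrableOn_compact (isCompact_orderedRegion u)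

theorem lastOrZero_mem_Icc {u x : Fin n → ℝ} (hx : x ∈ orderedRegion u) :
    lastOrZero x ∈ Icc 0 (lastOrZero u) := by
  cases n with
  | zero => simp [lastOrZero]
  | succ n => exact ⟨hx.2.1 _, hx.2.2 _⟩

theorem lastOrZero_init_le {u : Fin (n + 1) → ℝ} (hu : Monotone u) (h0 : 0 ≤ u) :
    lastOrZero (Fin.init u) ≤ u (Fin.last n) := by
  cases n with
  | zero => exact h0 _
  | succ n => exact hu (Fin.le_last _)

theorem mem_orderedRegion_succ_iff {u x : Fin (n + 1) → ℝ} :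
    x ∈ orderedRegion u ↔ Fin.init x ∈ orderedRegion (Fin.init u) ∧
      x (Fin.last n) ∈ Icc (lastOrZero (Fin.init x)) (u (Fin.last n)) := by
  constructor
  · rintro ⟨hmono, h0, hu⟩
    refine ⟨⟨hmono.comp Fin.strictMono_castSucc.monotone, fun i => h0 _, fun i => hu _⟩, ?_,
      hu _⟩
    cases n with
    | zero => exact h0 _
    | succ n => exact hmono (Fin.le_last _)
  · rintro ⟨hinit, hlo, hup⟩
    refine ⟨Fin.monotone_iff_le_succ.2 fun i => ?_, fun i => ?_, fun i => ?_⟩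
    · cases n with
      | zero => exact i.elim0
      | succ n =>
        induction i using Fin.lastCases with
        | last => simpa [lastOrZero, Fin.init] using hlo
        | cast j => simpa [Fin.init] using hinit.1 (Fin.castSucc_le_succ j)
    · induction i using Fin.lastCases with
      | last => exact (lastOrZero_mem_Icc hinit).1.trans hlo
      | cast j => exact hinit.2.1 j
    · induction i using Fin.lastCases with
      | last => exact hup
      | cast j => exact hinit.2.2 j

theorem integral_eq_integral_integral_init_last {α E : Type*} [MeasureSpace α]
    [SigmaFinite (volume : Measure α)] [NormedAddCommGroup E] [NormedSpace ℝ E]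
    {g : α × (Fin n → α) → E}
    (hg : Integrable fun x : Fin (n + 1) → α => g (x (Fin.last n), Fin.init x)) :
    ∫ x : Fin (n + 1) → α, g (x (Fin.last n), Fin.init x) = ∫ r, ∫ t, g (t, r) := by
  let e := MeasurableEquiv.piFinSuccAbove (fun _ : Fin (n + 1) => α) (Fin.last n)
  have he : ⇑e = fun x => (x (Fin.last n), Fin.init x) := by
    ext x j
    · rfl
    · simp [e, Fin.init, MeasurableEquiv.piFinSuccAbove]
  have hmp : MeasurePreserving e volume (volume.prod volume) :=
    volume_preserving_piFinSuccAbove (fun _ : Fin (n + 1) => α) (Fin.last n)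
  have hgint : Integrable g (volume.prod volume) :=
    (hmp.integrable_comp_emb e.measurableEmbedding).1 (by rwa [he])
  rw [← integral_prod_symm g hgint, ← hmp.integral_comp' g, he]

theorem setIntegral_orderedRegion_succ {u : Fin (n + 1) → ℝ} (hu : Monotone u) (h0 : 0 ≤ u)
    {f : ℝ → ℝ} (hf : Continuous f) :
    ∫ x in orderedRegion u, f (x (Fin.last n)) =
      ∫ r in orderedRegion (Fin.init u), ∫ t in lastOrZero r..u (Fin.last n), f t := by
  set c := u (Fin.last n)
  let A : Set (ℝ × (Fin n → ℝ)) :=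
    {z | z.2 ∈ orderedRegion (Fin.init u) ∧ z.1 ∈ Icc (lastOrZero z.2) c}
  set G := A.indicator fun z => f z.1
  have hG : (orderedRegion u).indicator (fun x => f (x (Fin.last n))) =
      fun x => G (x (Fin.last n), Fin.init x) := by
    ext x
    classical
    simp only [G, A, indicator, Set.mem_ofPred_eq]
    exact if_congr mem_orderedRegion_succ_iff rfl rfl
  have hinner r : ∫ t, G (t, r) =
      (orderedRegion (Fin.init u)).indicator (fun r => ∫ t in lastOrZero r..c, f t) r := by
    by_cases hr : r ∈ orderedRegion (Fin.init u)
    · have hle : lastOrZero r ≤ c := (lastOrZero_mem_Icc hr).2.trans (lastOrZero_init_le hu h0)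
      have hslice : (fun t => G (t, r)) = (Icc (lastOrZero r) c).indicator f := by
        ext t
        simp only [G, A, indicator, Set.mem_ofPred_eq, hr, true_and]
        congr
      rw [hslice, integral_indicator measurableSet_Icc, integral_Icc_eq_integral_Ioc,
        ← intervalIntegral.integral_of_le hle, indicator_of_mem hr]
    · simp [G, A, hr]
  have hint : Integrable ((orderedRegion u).indicator fun x => f (x (Fin.last n))) :=
    (integrableOn_orderedRegion (hf.comp (continuous_apply _)) u).integrable_indicator
      (measurableSet_orderedRegion u)
  rw [← integral_indicator (measurableSet_orderedRegion u), hG,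
    integral_eq_integral_integral_init_last (hG ▸ hint),
    ← integral_indicator (measurableSet_orderedRegion _)]
  simp_rw [hinner]

end OrderedRegion

theorem integral_pow_div_factorial (a b : ℝ) (k : ℕ) :
    ∫ t in a..b, t ^ k / k ! = b ^ (k + 1) / (k + 1)! - a ^ (k + 1) / (k + 1)! := by
  rw [intervalIntegral.integral_div, integral_pow, Nat.factorial_succ]
  push_cast
  field_simp

noncomputable def orderedMoment {n : ℕ} (u : Fin n → ℝ) (k : ℕ) : ℝ :=
  ∫ x in orderedRegion u, lastOrZero x ^ k / k !

theorem orderedMoment_zero {n : ℕ} (u : Fin n → ℝ) :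
    orderedMoment u 0 = volume.real (orderedRegion u) := by
  simp [orderedMoment]

theorem orderedMoment_fin_zero (u : Fin 0 → ℝ) (k : ℕ) :
    orderedMoment u k = if k = 0 then 1 else 0 := by
  have : orderedRegion u = univ :=
    Subsingleton.eq_univ_of_nonempty ⟨0, fun i => i.elim0, by simp⟩
  cases k
  · rw [orderedMoment_zero, this, Measure.volume_pi_eq_dirac]
    simp
  · simp [orderedMoment, lastOrZero]

theorem orderedMoment_succ {n : ℕ} {u : Fin (n + 1) → ℝ} (hu : Monotone u) (h0 : 0 ≤ u)
    (k : ℕ) :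
    orderedMoment u k = u (Fin.last n) ^ (k + 1) / (k + 1)! * orderedMoment (Fin.init u) 0 -
      orderedMoment (Fin.init u) (k + 1) := by
  have hint : IntegrableOn (fun r => lastOrZero r ^ (k + 1) / (k + 1)!)
      (orderedRegion (Fin.init u)) :=
    integrableOn_orderedRegion ((continuous_lastOrZero.pow _).div_const _) _
  calc orderedMoment u k
      = ∫ r in orderedRegion (Fin.init u), ∫ t in lastOrZero r..u (Fin.last n), t ^ k / k ! :=
        setIntegral_orderedRegion_succ hu h0 (f := fun t => t ^ k / k !) (by fun_prop)
    _ = ∫ r in orderedRegion (Fin.init u),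
          (u (Fin.last n) ^ (k + 1) / (k + 1)! - lastOrZero r ^ (k + 1) / (k + 1)!) := by
        simp_rw [integral_pow_div_factorial]
    _ = _ := by
        rw [integral_sub (integrableOn_orderedRegion continuous_const _) hint, setIntegral_const,
          orderedMoment_zero, smul_eq_mul, mul_comm]
        rfl

noncomputable def shiftedOrderMat (n : ℕ) (u : Fin n → ℝ) (k : ℕ) : Matrix (Fin n) (Fin n) ℝ :=
  fun i j =>
    let m := (j : ℕ) + 1 - i + if (j : ℕ) + 1 = n then k else 0
    if (i : ℕ) ≤ (j : ℕ) + 1 then u i ^ m / m ! else 0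

theorem shiftedOrderMat_zero (n : ℕ) (u : Fin n → ℝ) :
    shiftedOrderMat n u 0 = orderMat n u := by
  ext i j
  simp [shiftedOrderMat, orderMat]

theorem det_shiftedOrderMat_one (u : Fin 1 → ℝ) (k : ℕ) :
    (shiftedOrderMat 1 u k).det = u 0 ^ (k + 1) / (k + 1)! := by
  simp [Matrix.det_unique, shiftedOrderMat, add_comm]

theorem det_shiftedOrderMat_succ_succ {n : ℕ} (u : Fin (n + 2) → ℝ) (k : ℕ) :
    (shiftedOrderMat (n + 2) u k).det =
      u (Fin.last (n + 1)) ^ (k + 1) / (k + 1)! * (shiftedOrderMat (n + 1) (Fin.init u) 0).det -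
        (shiftedOrderMat (n + 1) (Fin.init u) (k + 1)).det := by
  have hlast : (shiftedOrderMat (n + 2) u k).submatrix (Fin.last (n + 1)).succAbove
      (Fin.last (n + 1)).succAbove = shiftedOrderMat (n + 1) (Fin.init u) 0 := by
    ext i j
    simp only [Matrix.submatrix_apply, Fin.succAbove_last, shiftedOrderMat, Fin.init,
      Fin.val_castSucc]
    split_ifs <;> first | rfl | omega
  have hprev : (shiftedOrderMat (n + 2) u k).submatrix (Fin.last (n + 1)).succAbove
      (Fin.last n).castSucc.succAbove = shiftedOrderMat (n + 1) (Fin.init u) (k + 1) := by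
    ext i j
    simp only [Matrix.submatrix_apply, Fin.succAbove_last, shiftedOrderMat, Fin.init,
      Fin.val_castSucc, Fin.succAbove, Fin.lt_def, Fin.val_last]
    split_ifs <;> simp only [Fin.val_castSucc, Fin.val_succ] at * <;>
      first
      | rfl
      | omega
      | exact congrArg (fun m : ℕ => u i.castSucc ^ m / (m ! : ℝ)) (by omega)
  have hzero (j : Fin n) :
      shiftedOrderMat (n + 2) u k (Fin.last (n + 1)) j.castSucc.castSucc = 0 :=
    if_neg (by simp)
  rw [Matrix.det_succ_row _ (Fin.last (n + 1)), Fin.sum_univ_castSucc, Fin.sum_univ_castSucc,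
    hlast, hprev]
  simp only [hzero, mul_zero, zero_mul, Finset.sum_const_zero, zero_add]
  simp [shiftedOrderMat, add_comm 1 k]
  ring

theorem orderedMoment_eq_det {n : ℕ} {u : Fin (n + 1) → ℝ} (hu : Monotone u) (h0 : 0 ≤ u)
    (k : ℕ) : orderedMoment u k = (shiftedOrderMat (n + 1) u k).det := by
  induction n generalizing k with
  | zero =>
    rw [orderedMoment_succ hu h0, orderedMoment_fin_zero, orderedMoment_fin_zero,
      det_shiftedOrderMat_one]
    simp
  | succ n ih =>
    have hu' : Monotone (Fin.init u) := hu.comp Fin.strictMono_castSucc.monotone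
    rw [orderedMoment_succ hu h0, ih hu' (fun i => h0 _), ih hu' (fun i => h0 _),
      det_shiftedOrderMat_succ_succ]

theorem volumeReal_orderedRegion {n : ℕ} {u : Fin n → ℝ} (hu : Monotone u) (h0 : 0 ≤ u) :
    volume.real (orderedRegion u) = (orderMat n u).det := by
  rw [← orderedMoment_zero]
  cases n with
  | zero => simp [orderedMoment_fin_zero]
  | succ n => rw [orderedMoment_eq_det hu h0, shiftedOrderMat_zero]

theorem stmt8_general (d : ℕ) (u : Fin d → ℝ)
    (hmono : Monotone u) (h0 : ∀ i, 0 ≤ u i) (h1 : ∀ i, u i ≤ 1) :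
    ((((unifPi d).map sortVec) {y | ∀ i, y i ≤ u i}).toReal)
      = (Nat.factorial d : ℝ) * (orderMat d u).det := by
  have hbox : MeasurableSet (univ.pi fun _ : Fin d => Icc (0 : ℝ) 1) :=
    .univ_pi fun _ => measurableSet_Icc
  have hregion : Iic u ∩ (univ.pi fun _ => Icc 0 1) ∩ {x | Monotone x} = orderedRegion u := by
    ext x
    simp only [orderedRegion, mem_inter_iff, mem_Iic, mem_univ_pi, mem_Icc]
    exact ⟨fun ⟨⟨hxu, hx01⟩, hx⟩ => ⟨hx, fun i => (hx01 i).1, hxu⟩,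
      fun ⟨hx, hx0, hxu⟩ => ⟨⟨hxu, fun i => ⟨hx0 i, (hxu i).trans (h1 i)⟩⟩, hx⟩⟩
  change ((unifPi d).map sortVec (Iic u)).toReal = _
  rw [Measure.map_apply measurable_sortVec measurableSet_Iic, unifPi_eq_restrict,
    Measure.restrict_apply' hbox, ← preimage_sortVec_pi_univ, ← preimage_inter,
    volume_preimage_sortVec (measurableSet_Iic.inter hbox), hregion, ENNReal.toReal_mul,
    ENNReal.toReal_natCast, ← measureReal_def, volumeReal_orderedRegion hmono h0]

theorem stmt8 (d : ℕ) (hd : 0 < d) (u : Fin d → ℝ)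
    (hmono : Monotone u) (h0 : ∀ i, 0 ≤ u i) (h1 : ∀ i, u i ≤ 1) :
    ((((unifPi d).map sortVec) {y | ∀ i, y i ≤ u i}).toReal)
      = (Nat.factorial d : ℝ) * (orderMat d u).det :=
  stmt8_general d u hmono h0 h1
end
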